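/- H¹_r(X) coincides with the space of restrictions to X of odd functions in H¹(N): an integrable function f on X belongs to H¹_r(X) if and only if there exists F ∈ H¹(N) with F(−t,x) = −F(t,x) for ν-almost every (t,x) ∈ N and F|_X = f. -/

import Mathlib

/-!
The nontrivial direction extends `F ∈ H¹(N)` oddly from `X`, `G = 1_X F - (1_X F)(-t, x)`.
The map `F ↦ G` is linear and at most doubles `L¹` norms, so it preserves `H¹(N)` as soon as it
sends every atom `a` to a combination of two atoms with coefficients bounded in terms of `C_D`.
If the ball of `a` misses `X`, then `G = 0`; if it lies in `X`, then `G = a - a(-t, x)` and the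
reflected function is again an atom; if it straddles `t = 0`, then `G` is supported in the doubled
ball, has mean zero, and the doubling condition bounds its `L²` norm by a multiple of the
normalisation of that ball. Interleaving these decompositions gives one of `G`.
-/

open MeasureTheory Metric Filter Set

noncomputable section

/-- The parabolic quasi-distance on `ℝ × E`. -/
def pdist {E : Type*} [MetricSpace E] (p q : ℝ × E) : ℝ :=
  max (Real.sqrt |p.1 - q.1|) (dist p.2 q.2)

/-- The open parabolic ball in `N = ℝ × E`. -/
def pball {E : Type*} [MetricSpace E] (c : ℝ × E) (r : ℝ) : Set (ℝ × E) :=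
  {p | pdist p c < r}

/-- The upper half space `X = (0,∞) × E` of `N = ℝ × E`. -/
def Xset (E : Type*) : Set (ℝ × E) := {p | 0 < p.1}

/-- The product measure `ν = Lebesgue ⊗ μ` on `N = ℝ × E`. -/
def pmeas {E : Type*} [MeasurableSpace E] (μ : Measure E) : Measure (ℝ × E) :=
  (volume : Measure ℝ).prod μ

/-- A `(1,2)`-atom on `N`: supported in a parabolic ball `Q`, mean value zero, and
`‖a‖_{L²(ν)} ≤ ν(Q)^{-1/2}`. -/
def IsAtom12 {E : Type*} [MetricSpace E] [MeasurableSpace E]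
    (μ : Measure E) (a : ℝ × E → ℝ) : Prop :=
  ∃ (c : ℝ × E) (r : ℝ), 0 < r ∧ Function.support a ⊆ pball c r ∧
    Integrable a (pmeas μ) ∧ (∫ p, a p ∂(pmeas μ)) = 0 ∧
    eLpNorm a 2 (pmeas μ) ≤ (pmeas μ (pball c r)) ^ (-(1:ℝ)/2)

/-- `f = Σ λ_i a_i` with convergence in `L¹(ρ)`. -/
def HasL1Decomp {E : Type*} [MeasurableSpace E] (ρ : Measure (ℝ × E))
    (f : ℝ × E → ℝ) (lam : ℕ → ℝ) (a : ℕ → ℝ × E → ℝ) : Prop :=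
  Summable (fun i => |lam i|) ∧
  Tendsto (fun k => eLpNorm (fun p => f p - ∑ i ∈ Finset.range k, lam i * a i p) 1 ρ)
    atTop (nhds 0)

/-- Membership in the atomic Hardy space `H¹(N)`. -/
def MemH1 {E : Type*} [MetricSpace E] [MeasurableSpace E]
    (μ : Measure E) (f : ℝ × E → ℝ) : Prop :=
  Integrable f (pmeas μ) ∧
  ∃ (lam : ℕ → ℝ) (a : ℕ → ℝ × E → ℝ), (∀ i, IsAtom12 μ (a i)) ∧
    HasL1Decomp (pmeas μ) f lam a

/-- The `H¹(N)` norm: infimum of `Σ |λ_i|` over all atomic decompositions. -/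
def H1norm {E : Type*} [MetricSpace E] [MeasurableSpace E]
    (μ : Measure E) (f : ℝ × E → ℝ) : ℝ :=
  sInf {c | ∃ (lam : ℕ → ℝ) (a : ℕ → ℝ × E → ℝ), (∀ i, IsAtom12 μ (a i)) ∧
    HasL1Decomp (pmeas μ) f lam a ∧ c = ∑' i, |lam i|}

/-- Membership in `H¹_r(X)`: `f ∈ L¹(X,ν)` is the restriction to `X` of some `F ∈ H¹(N)`. -/
def MemH1r {E : Type*} [MetricSpace E] [MeasurableSpace E]
    (μ : Measure E) (f : ℝ × E → ℝ) : Prop :=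
  IntegrableOn f (Xset E) (pmeas μ) ∧
  ∃ F : ℝ × E → ℝ, MemH1 μ F ∧ F =ᵐ[(pmeas μ).restrict (Xset E)] f

/-- The quotient norm on `H¹_r(X)`. -/
def H1rnorm {E : Type*} [MetricSpace E] [MeasurableSpace E]
    (μ : Measure E) (f : ℝ × E → ℝ) : ℝ :=
  sInf {c | ∃ F : ℝ × E → ℝ, MemH1 μ F ∧ F =ᵐ[(pmeas μ).restrict (Xset E)] f ∧
    c = H1norm μ F}

/-- Membership in `H¹_z(X)`: the extension of `f` by zero belongs to `H¹(N)`. -/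
def MemH1z {E : Type*} [MetricSpace E] [MeasurableSpace E]
    (μ : Measure E) (f : ℝ × E → ℝ) : Prop :=
  IntegrableOn f (Xset E) (pmeas μ) ∧ MemH1 μ ((Xset E).indicator f)

/-- The `H¹_z(X)` norm: the `H¹(N)` norm of the zero extension. -/
def H1znorm {E : Type*} [MetricSpace E] [MeasurableSpace E]
    (μ : Measure E) (f : ℝ × E → ℝ) : ℝ :=
  H1norm μ ((Xset E).indicator f)

open scoped ENNReal

lemma eLpNorm_one_le_one_of_eLpNorm_two_le {α : Type*} [MeasurableSpace α] {ρ : Measure α}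
    {Q : Set α} {a : α → ℝ} (hsupp : Function.support a ⊆ Q) (ha : AEStronglyMeasurable a ρ)
    (hL2 : eLpNorm a 2 ρ ≤ ρ Q ^ (-(1 : ℝ) / 2)) :
    eLpNorm a 1 ρ ≤ 1 := by
  rw [← eLpNorm_restrict_eq_of_support_subset hsupp]
  calc eLpNorm a 1 (ρ.restrict Q)
      ≤ eLpNorm a 2 (ρ.restrict Q) *
          ρ.restrict Q univ ^ (1 / (1 : ℝ≥0∞).toReal - 1 / (2 : ℝ≥0∞).toReal) :=
        eLpNorm_le_eLpNorm_mul_rpow_measure_univ (by norm_num) ha.restrict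
    _ ≤ ρ Q ^ (-(1 : ℝ) / 2) * ρ Q ^ ((1 : ℝ) / 2) := by
        rw [eLpNorm_restrict_eq_of_support_subset hsupp, Measure.restrict_apply_univ,
          show 1 / (1 : ℝ≥0∞).toReal - 1 / (2 : ℝ≥0∞).toReal = 1 / 2 by norm_num]
        gcongr
    _ ≤ 1 := by
        rw [neg_div, ENNReal.rpow_neg, mul_comm]
        exact ENNReal.mul_inv_le_one _

lemma rpow_neg_half_le_of_le_mul {A B K : ℝ≥0∞} (hK₀ : K ≠ 0) (hK : K ≠ ⊤) (hB : B ≤ K * A) :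
    A ^ (-(1 : ℝ) / 2) ≤ K ^ ((1 : ℝ) / 2) * B ^ (-(1 : ℝ) / 2) := by
  have hK₀' : K ^ ((1 : ℝ) / 2) ≠ 0 := by simp [ENNReal.rpow_eq_zero_iff, hK₀, hK]
  have hK' : K ^ ((1 : ℝ) / 2) ≠ ⊤ := ENNReal.rpow_ne_top_of_nonneg (by norm_num) hK
  simp only [neg_div, ENNReal.rpow_neg]
  calc (A ^ ((1 : ℝ) / 2))⁻¹
      = K ^ ((1 : ℝ) / 2) * (K ^ ((1 : ℝ) / 2) * A ^ ((1 : ℝ) / 2))⁻¹ := by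
        rw [ENNReal.mul_inv (Or.inl hK₀') (Or.inl hK'), ← mul_assoc,
          ENNReal.mul_inv_cancel hK₀' hK', one_mul]
    _ ≤ K ^ ((1 : ℝ) / 2) * (B ^ ((1 : ℝ) / 2))⁻¹ := by
        rw [← ENNReal.mul_rpow_of_nonneg _ _ (by norm_num)]
        gcongr

lemma tendsto_nhds_zero_of_even_odd_le {D u : ℕ → ℝ≥0∞} (hu : Tendsto u atTop (nhds 0))
    (h_even : ∀ m, D (2 * m) ≤ u m) (h_odd : ∀ m, D (2 * m + 1) ≤ u m) :
    Tendsto D atTop (nhds 0) := by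
  have hD : ∀ k, D k ≤ u (k / 2) := by
    intro k
    rcases Nat.even_or_odd' k with ⟨m, rfl | rfl⟩
    · simpa using h_even m
    · simpa [Nat.add_div_of_dvd_right] using h_odd m
  exact tendsto_of_tendsto_of_tendsto_of_le_of_le tendsto_const_nhds
    (hu.comp (Nat.tendsto_div_const_atTop two_ne_zero)) (fun _ => zero_le) hD

section Geometry

variable {E : Type*} [MetricSpace E]

lemma pball_eq_prod (t : ℝ) (x : E) {r : ℝ} (hr : 0 < r) :
    pball (t, x) r = Ioo (t - r ^ 2) (t + r ^ 2) ×ˢ ball x r := by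
  ext ⟨s, y⟩
  simp only [pball, pdist, mem_ofPred_eq, max_lt_iff, mem_prod, mem_Ioo, mem_ball,
    Real.sqrt_lt' hr, abs_lt, sub_lt_iff_lt_add', lt_sub_iff_add_lt']
  constructor <;> rintro ⟨⟨h₁, h₂⟩, h₃⟩ <;> exact ⟨⟨by linarith, by linarith⟩, h₃⟩

lemma pball_mono (c : ℝ × E) {r R : ℝ} (h : r ≤ R) : pball c r ⊆ pball c R :=
  fun _ hp => lt_of_lt_of_le hp h

lemma pball_subset_Xset {t : ℝ} (x : E) {r : ℝ} (hr : 0 < r) (ht : r ^ 2 ≤ t) :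
    pball (t, x) r ⊆ Xset E := by
  rw [pball_eq_prod t x hr]
  rintro p ⟨⟨hp, -⟩, -⟩
  change 0 < p.1
  linarith

lemma disjoint_pball_Xset {t : ℝ} (x : E) {r : ℝ} (hr : 0 < r) (ht : t + r ^ 2 ≤ 0) :
    Disjoint (pball (t, x) r) (Xset E) := by
  rw [pball_eq_prod t x hr, Set.disjoint_left]
  rintro p ⟨⟨-, hp⟩, -⟩ (hX : 0 < p.1)
  linarith

lemma pball_neg_subset_pball_two_mul {t : ℝ} (x : E) {r : ℝ} (hr : 0 < r) (ht : |t| < r ^ 2) :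
    pball (-t, x) r ⊆ pball (t, x) (2 * r) := by
  rw [pball_eq_prod _ x hr, pball_eq_prod _ x (by positivity)]
  rintro p ⟨⟨h₁, h₂⟩, hx⟩
  obtain ⟨ht₁, ht₂⟩ := abs_lt.mp ht
  exact ⟨⟨by nlinarith, by nlinarith⟩, ball_subset_ball (by linarith) hx⟩

end Geometry

def timeReflection (E : Type*) [MeasurableSpace E] : (ℝ × E) ≃ᵐ (ℝ × E) :=
  (MeasurableEquiv.neg ℝ).prodCongr (MeasurableEquiv.refl E)

@[simp]
lemma timeReflection_apply {E : Type*} [MeasurableSpace E] (p : ℝ × E) :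
    timeReflection E p = (-p.1, p.2) :=
  rfl

lemma preimage_timeReflection_pball {E : Type*} [MetricSpace E] [MeasurableSpace E]
    (c : ℝ × E) (r : ℝ) : timeReflection E ⁻¹' pball c r = pball (timeReflection E c) r := by
  ext p
  simp only [pball, pdist, mem_preimage, mem_ofPred_eq, timeReflection_apply, sub_neg_eq_add]
  rw [show -p.1 - c.1 = -(p.1 + c.1) by ring, abs_neg]

lemma sigmaFinite_of_measure_ball_lt_top {E : Type*} [MetricSpace E] [MeasurableSpace E]
    {μ : Measure E} (h : ∀ (x : E) (r : ℝ), 0 < r → μ (ball x r) < ⊤) :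
    SigmaFinite μ := by
  cases isEmpty_or_nonempty E with
  | inl _ => infer_instance
  | inr hE =>
    obtain ⟨x₀⟩ := hE
    refine ⟨⟨⟨fun n => ball x₀ (n + 1), fun _ => mem_univ _,
      fun n => h x₀ (n + 1) n.cast_add_one_pos, ?_⟩⟩⟩
    refine eq_univ_of_forall fun y => mem_iUnion.mpr ?_
    obtain ⟨n, hn⟩ := exists_nat_gt (dist y x₀)
    exact ⟨n, mem_ball.mpr (by linarith)⟩

section Measure

variable {E : Type*} [MeasurableSpace E] {μ : Measure E} [SigmaFinite μ]

lemma measurePreserving_timeReflection :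
    MeasurePreserving (timeReflection E) (pmeas μ) (pmeas μ) :=
  (Measure.measurePreserving_neg (volume : Measure ℝ)).prod (MeasurePreserving.id μ)

variable [MetricSpace E]

lemma pmeas_pball (t : ℝ) (x : E) {r : ℝ} (hr : 0 < r) :
    pmeas μ (pball (t, x) r) = ENNReal.ofReal (2 * r ^ 2) * μ (ball x r) := by
  rw [pball_eq_prod t x hr, pmeas, Measure.prod_prod, Real.volume_Ioo]
  ring_nf

lemma pmeas_pball_timeReflection (c : ℝ × E) (r : ℝ) :
    pmeas μ (pball (timeReflection E c) r) = pmeas μ (pball c r) := by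
  rw [← preimage_timeReflection_pball, measurePreserving_timeReflection.measure_preimage_equiv]

lemma pmeas_pball_two_mul_le {C_D : ℝ}
    (hdoub : ∀ (x : E) (r : ℝ), 0 < r → μ (ball x (2 * r)) ≤ ENNReal.ofReal C_D * μ (ball x r))
    (t : ℝ) (x : E) {r : ℝ} (hr : 0 < r) :
    pmeas μ (pball (t, x) (2 * r)) ≤ ENNReal.ofReal (4 * C_D) * pmeas μ (pball (t, x) r) := by
  rw [pmeas_pball t x (by positivity), pmeas_pball t x hr,
    show 2 * (2 * r) ^ 2 = 4 * (2 * r ^ 2) by ring,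
    ENNReal.ofReal_mul (by norm_num : (0 : ℝ) ≤ 4), ENNReal.ofReal_mul (by norm_num : (0 : ℝ) ≤ 4)]
  calc ENNReal.ofReal 4 * ENNReal.ofReal (2 * r ^ 2) * μ (ball x (2 * r))
      ≤ ENNReal.ofReal 4 * ENNReal.ofReal (2 * r ^ 2) * (ENNReal.ofReal C_D * μ (ball x r)) := by
        gcongr
        exact hdoub x r hr
    _ = ENNReal.ofReal 4 * ENNReal.ofReal C_D * (ENNReal.ofReal (2 * r ^ 2) * μ (ball x r)) := by
        ring

end Measure

section Atoms

variable {E : Type*} [MetricSpace E] [MeasurableSpace E] {μ : Measure E} {a : ℝ × E → ℝ}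

lemma IsAtom12.integrable (ha : IsAtom12 μ a) : Integrable a (pmeas μ) := by
  obtain ⟨_, _, -, -, hint, -, -⟩ := ha
  exact hint

lemma IsAtom12.eLpNorm_one_le (ha : IsAtom12 μ a) : eLpNorm a 1 (pmeas μ) ≤ 1 := by
  obtain ⟨_, _, -, hsupp, hint, -, hL2⟩ := ha
  exact eLpNorm_one_le_one_of_eLpNorm_two_le hsupp hint.aestronglyMeasurable hL2

lemma isAtom12_inv_smul {c : ℝ × E} {r : ℝ} (hr : 0 < r) (hsupp : Function.support a ⊆ pball c r)
    (hint : Integrable a (pmeas μ)) (hmean : ∫ p, a p ∂(pmeas μ) = 0) {M : ℝ} (hM : 0 < M)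
    (hL2 : eLpNorm a 2 (pmeas μ) ≤ ENNReal.ofReal M * pmeas μ (pball c r) ^ (-(1 : ℝ) / 2)) :
    IsAtom12 μ (M⁻¹ • a) := by
  refine ⟨c, r, hr, (Function.support_const_smul_subset _ _).trans hsupp, hint.smul _,
    by simp only [Pi.smul_apply, integral_smul, hmean, smul_zero], ?_⟩
  rw [eLpNorm_const_smul, Real.enorm_eq_ofReal (inv_nonneg.2 hM.le)]
  calc ENNReal.ofReal M⁻¹ * eLpNorm a 2 (pmeas μ)
      ≤ ENNReal.ofReal M⁻¹ * (ENNReal.ofReal M * pmeas μ (pball c r) ^ (-(1 : ℝ) / 2)) := by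
        gcongr
    _ = pmeas μ (pball c r) ^ (-(1 : ℝ) / 2) := by
        rw [← mul_assoc, ← ENNReal.ofReal_mul (inv_nonneg.2 hM.le), inv_mul_cancel₀ hM.ne',
          ENNReal.ofReal_one, one_mul]

lemma IsAtom12.comp_timeReflection [SigmaFinite μ] (ha : IsAtom12 μ a) :
    IsAtom12 μ (a ∘ timeReflection E) := by
  obtain ⟨c, r, hr, hsupp, hint, hmean, hL2⟩ := ha
  refine ⟨timeReflection E c, r, hr, ?_, ?_, ?_, ?_⟩
  · rw [Function.support_comp_eq_preimage, ← preimage_timeReflection_pball]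
    exact preimage_mono hsupp
  · exact (measurePreserving_timeReflection.integrable_comp_emb
      (timeReflection E).measurableEmbedding).mpr hint
  · rwa [Function.comp_def, measurePreserving_timeReflection.integral_comp']
  · rwa [eLpNorm_comp_measurePreserving hint.aestronglyMeasurable measurePreserving_timeReflection,
      pmeas_pball_timeReflection]

end Atoms

def interleave {α : Type*} (u v : ℕ → α) (j : ℕ) : α :=
  if Even j then u (j / 2) else v (j / 2)

section Interleave

variable {α : Type*} (u v : ℕ → α)

@[simp]
lemma interleave_two_mul (m : ℕ) : interleave u v (2 * m) = u m := by
  simp [interleave]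

@[simp]
lemma interleave_two_mul_add_one (m : ℕ) : interleave u v (2 * m + 1) = v m := by
  simp [interleave, Nat.add_div_of_dvd_right]

lemma sum_range_two_mul_interleave {M : Type*} [AddCommMonoid M] (u v : ℕ → M) (k : ℕ) :
    ∑ j ∈ Finset.range (2 * k), interleave u v j = ∑ i ∈ Finset.range k, (u i + v i) := by
  induction k with
  | zero => simp
  | succ k ih =>
    rw [show 2 * (k + 1) = 2 * k + 1 + 1 by ring, Finset.sum_range_succ, Finset.sum_range_succ,
      ih, Finset.sum_range_succ, interleave_two_mul, interleave_two_mul_add_one, add_assoc]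

end Interleave

lemma sub_sum_mul_eq_sub_sum_smul {α : Type*} (f : α → ℝ) (lam : ℕ → ℝ) (a : ℕ → α → ℝ) (k : ℕ) :
    (fun p => f p - ∑ i ∈ Finset.range k, lam i * a i p) =
      f - ∑ i ∈ Finset.range k, lam i • a i := by
  ext p
  simp [Finset.sum_apply]

lemma summable_abs_mul_of_abs_le {lam m : ℕ → ℝ} {K : ℝ} (hlam : Summable fun i => |lam i|)
    (hm : ∀ i, |m i| ≤ K) : Summable fun i => |lam i * m i| :=
  (hlam.mul_left K).of_nonneg_of_le (fun _ => abs_nonneg _) fun i => by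
    rw [abs_mul, mul_comm K]
    exact mul_le_mul_of_nonneg_left (hm i) (abs_nonneg _)

theorem MemH1.map {E : Type*} [MetricSpace E] [MeasurableSpace E] {μ : Measure E}
    (T : (ℝ × E → ℝ) →ₗ[ℝ] (ℝ × E → ℝ)) {C : ℝ≥0∞} (hC : C ≠ ⊤) {K : ℝ}
    (hT_int : ∀ g, Integrable g (pmeas μ) → Integrable (T g) (pmeas μ))
    (hT_le : ∀ g, Integrable g (pmeas μ) → eLpNorm (T g) 1 (pmeas μ) ≤ C * eLpNorm g 1 (pmeas μ))
    (hT_atom : ∀ a, IsAtom12 μ a → ∃ (m₁ m₂ : ℝ) (A₁ A₂ : ℝ × E → ℝ), IsAtom12 μ A₁ ∧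
      IsAtom12 μ A₂ ∧ |m₁| ≤ K ∧ |m₂| ≤ K ∧ T a = m₁ • A₁ + m₂ • A₂)
    {F : ℝ × E → ℝ} (hF : MemH1 μ F) : MemH1 μ (T F) := by
  obtain ⟨hFint, lam, a, ha, hlam, hlim⟩ := hF
  choose m₁ m₂ A₁ A₂ hA₁ hA₂ hm₁ hm₂ hTa using fun i => hT_atom _ (ha i)
  set lam' := interleave (fun i => lam i * m₁ i) (fun i => lam i * m₂ i)
  set a' := interleave A₁ A₂
  have ha' : ∀ j, IsAtom12 μ (a' j) := fun j => by
    unfold a' interleave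
    split_ifs
    exacts [hA₁ _, hA₂ _]
  have hlam' : Summable fun j => |lam' j| :=
    .even_add_odd (by simpa [lam'] using summable_abs_mul_of_abs_le hlam hm₁)
      (by simpa [lam'] using summable_abs_mul_of_abs_le hlam hm₂)
  have hsum (k : ℕ) :
      ∑ j ∈ Finset.range (2 * k), lam' j • a' j = T (∑ i ∈ Finset.range k, lam i • a i) := by
    have hterm : (fun j => lam' j • a' j) =
        interleave (fun i => (lam i * m₁ i) • A₁ i) (fun i => (lam i * m₂ i) • A₂ i) := by
      ext j : 1
      unfold lam' a' interleave
      split_ifs <;> rfl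
    rw [hterm, sum_range_two_mul_interleave, map_sum]
    refine Finset.sum_congr rfl fun i _ => ?_
    rw [map_smul, hTa, smul_add, mul_smul, mul_smul]
  have hint_sum (k : ℕ) : Integrable (F - ∑ i ∈ Finset.range k, lam i • a i) (pmeas μ) :=
    hFint.sub (integrable_finsetSum' _ fun i _ => (ha i).integrable.smul _)
  have h_even (k : ℕ) : eLpNorm (T F - ∑ j ∈ Finset.range (2 * k), lam' j • a' j) 1 (pmeas μ) ≤
      C * eLpNorm (F - ∑ i ∈ Finset.range k, lam i • a i) 1 (pmeas μ) := by
    rw [hsum, ← map_sub]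
    exact hT_le _ (hint_sum k)
  have h_odd (k : ℕ) : eLpNorm (T F - ∑ j ∈ Finset.range (2 * k + 1), lam' j • a' j) 1 (pmeas μ) ≤
      C * eLpNorm (F - ∑ i ∈ Finset.range k, lam i • a i) 1 (pmeas μ) + ‖lam' (2 * k)‖ₑ := by
    rw [Finset.sum_range_succ, sub_add_eq_sub_sub]
    have hT_sub : Integrable (T F - ∑ j ∈ Finset.range (2 * k), lam' j • a' j) (pmeas μ) := by
      rw [hsum, ← map_sub]
      exact hT_int _ (hint_sum k)
    refine (eLpNorm_sub_le hT_sub.aestronglyMeasurable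
      ((ha' _).integrable.smul _).aestronglyMeasurable le_rfl).trans (add_le_add (h_even k) ?_)
    rw [eLpNorm_const_smul]
    exact mul_le_of_le_one_right zero_le (ha' _).eLpNorm_one_le
  have hlam'_lim : Tendsto (fun k => ‖lam' (2 * k)‖ₑ) atTop (nhds 0) := by
    have h := (hlam'.of_abs.tendsto_atTop_zero.comp (tendsto_id.const_mul_atTop' two_pos)).enorm
    simpa using h
  refine ⟨hT_int F hFint, lam', a', ha', hlam', ?_⟩
  simp_rw [sub_sum_mul_eq_sub_sum_smul] at hlim ⊢
  have hu := (ENNReal.Tendsto.const_mul hlim (Or.inr hC)).add hlam'_lim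
  rw [mul_zero, zero_add] at hu
  exact tendsto_nhds_zero_of_even_odd_le hu (fun k => (h_even k).trans le_self_add) h_odd

section OddExtension

variable {E : Type*} [MeasurableSpace E]

def oddExtension (E : Type*) [MeasurableSpace E] : (ℝ × E → ℝ) →ₗ[ℝ] (ℝ × E → ℝ) where
  toFun g := (Xset E).indicator g - (Xset E).indicator g ∘ timeReflection E
  map_add' f g := by
    ext p
    simp only [indicator_add', Pi.add_apply, Pi.sub_apply, Function.comp_apply]
    ring
  map_smul' c g := by
    ext p
    simp only [Pi.smul_apply, Pi.sub_apply, Function.comp_apply, RingHom.id_apply, smul_eq_mul,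
      show c • g = (c * g ·) from rfl, indicator_mul_right, mul_sub]

lemma oddExtension_apply (g : ℝ × E → ℝ) (p : ℝ × E) :
    oddExtension E g p = (Xset E).indicator g p - (Xset E).indicator g (-p.1, p.2) :=
  rfl

lemma oddExtension_apply_neg (g : ℝ × E → ℝ) (p : ℝ × E) :
    oddExtension E g (-p.1, p.2) = -oddExtension E g p := by
  simp only [oddExtension_apply, neg_neg, neg_sub]

lemma oddExtension_of_mem (g : ℝ × E → ℝ) {p : ℝ × E} (hp : p ∈ Xset E) :
    oddExtension E g p = g p := by
  have hp' : ((-p.1, p.2) : ℝ × E) ∉ Xset E := fun h => (neg_pos.mp h).not_gt (show 0 < p.1 from hp)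
  rw [oddExtension_apply, indicator_of_mem hp, indicator_of_notMem hp', sub_zero]

lemma oddExtension_of_support_subset {g : ℝ × E → ℝ} (hg : Function.support g ⊆ Xset E) :
    oddExtension E g = g - g ∘ timeReflection E := by
  change (Xset E).indicator g - (Xset E).indicator g ∘ timeReflection E = _
  rw [indicator_eq_self.mpr hg]

lemma oddExtension_of_disjoint {g : ℝ × E → ℝ} (hg : Disjoint (Function.support g) (Xset E)) :
    oddExtension E g = 0 := by
  change (Xset E).indicator g - (Xset E).indicator g ∘ timeReflection E = 0
  rw [indicator_eq_zero'.mpr hg, Pi.zero_comp, sub_self]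

lemma support_oddExtension_subset (g : ℝ × E → ℝ) :
    Function.support (oddExtension E g) ⊆
      Function.support g ∪ timeReflection E ⁻¹' Function.support g := by
  have hXg : Function.support ((Xset E).indicator g) ⊆ Function.support g := by
    rw [support_indicator]
    exact inter_subset_right
  refine (Function.support_sub _ _).trans (union_subset_union hXg ?_)
  rw [Function.support_comp_eq_preimage]
  exact preimage_mono hXg

lemma measurableSet_Xset : MeasurableSet (Xset E) :=
  measurableSet_lt measurable_const measurable_fst

variable {μ : Measure E} [SigmaFinite μ] {g : ℝ × E → ℝ}

lemma integrable_oddExtension (hg : Integrable g (pmeas μ)) :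
    Integrable (oddExtension E g) (pmeas μ) :=
  (hg.indicator measurableSet_Xset).sub ((measurePreserving_timeReflection.integrable_comp_emb
    (timeReflection E).measurableEmbedding).mpr (hg.indicator measurableSet_Xset))

lemma integral_oddExtension (hg : Integrable g (pmeas μ)) :
    ∫ p, oddExtension E g p ∂(pmeas μ) = 0 := by
  have hXg := hg.indicator measurableSet_Xset
  have hXgR : Integrable (fun p => (Xset E).indicator g (timeReflection E p)) (pmeas μ) :=
    (measurePreserving_timeReflection.integrable_comp_emb
      (timeReflection E).measurableEmbedding).mpr hXg
  change ∫ p, ((Xset E).indicator g p - (Xset E).indicator g (timeReflection E p)) ∂(pmeas μ) = 0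
  rw [integral_sub hXg hXgR, measurePreserving_timeReflection.integral_comp', sub_self]

lemma eLpNorm_oddExtension_le (hg : AEStronglyMeasurable g (pmeas μ)) {q : ℝ≥0∞} (hq : 1 ≤ q) :
    eLpNorm (oddExtension E g) q (pmeas μ) ≤ 2 * eLpNorm g q (pmeas μ) := by
  have hXg := hg.indicator measurableSet_Xset
  calc eLpNorm (oddExtension E g) q (pmeas μ)
      ≤ eLpNorm ((Xset E).indicator g) q (pmeas μ)
          + eLpNorm ((Xset E).indicator g ∘ timeReflection E) q (pmeas μ) :=
        eLpNorm_sub_le hXg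
          (hXg.comp_quasiMeasurePreserving measurePreserving_timeReflection.quasiMeasurePreserving)
          hq
    _ = 2 * eLpNorm ((Xset E).indicator g) q (pmeas μ) := by
        rw [eLpNorm_comp_measurePreserving hXg measurePreserving_timeReflection, two_mul]
    _ ≤ 2 * eLpNorm g q (pmeas μ) := by
        gcongr
        exact eLpNorm_indicator_le g

end OddExtension

section OddExtensionOfAtoms

variable {E : Type*} [MetricSpace E] [MeasurableSpace E] {μ : Measure E} [SigmaFinite μ]
  {C_D : ℝ}

lemma isAtom12_smul_oddExtension (hCD : 0 < C_D)
    (hdoub : ∀ (x : E) (r : ℝ), 0 < r → μ (ball x (2 * r)) ≤ ENNReal.ofReal C_D * μ (ball x r))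
    {a : ℝ × E → ℝ} {t : ℝ} {x : E} {r : ℝ} (hr : 0 < r)
    (hsupp : Function.support a ⊆ pball (t, x) r) (hint : Integrable a (pmeas μ))
    (hL2 : eLpNorm a 2 (pmeas μ) ≤ pmeas μ (pball (t, x) r) ^ (-(1 : ℝ) / 2))
    (ht : |t| < r ^ 2) :
    IsAtom12 μ ((2 * √(4 * C_D))⁻¹ • oddExtension E a) := by
  have hsupp' : Function.support (oddExtension E a) ⊆ pball (t, x) (2 * r) := by
    refine (support_oddExtension_subset a).trans (union_subset ?_ ?_)
    · exact hsupp.trans (pball_mono _ (by linarith))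
    · refine (preimage_mono hsupp).trans ?_
      rw [preimage_timeReflection_pball]
      exact pball_neg_subset_pball_two_mul x hr ht
  have hsqrt : ENNReal.ofReal (4 * C_D) ^ ((1 : ℝ) / 2) = ENNReal.ofReal √(4 * C_D) := by
    rw [ENNReal.ofReal_rpow_of_nonneg (by positivity) (by norm_num), Real.sqrt_eq_rpow]
  refine isAtom12_inv_smul (by positivity) hsupp' (integrable_oddExtension hint)
    (integral_oddExtension hint) (by positivity) ?_
  calc eLpNorm (oddExtension E a) 2 (pmeas μ)
      ≤ 2 * pmeas μ (pball (t, x) r) ^ (-(1 : ℝ) / 2) :=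
        (eLpNorm_oddExtension_le hint.aestronglyMeasurable one_le_two).trans (by gcongr)
    _ ≤ 2 * (ENNReal.ofReal (4 * C_D) ^ ((1 : ℝ) / 2) *
          pmeas μ (pball (t, x) (2 * r)) ^ (-(1 : ℝ) / 2)) := by
        gcongr
        exact rpow_neg_half_le_of_le_mul (by simpa using hCD) ENNReal.ofReal_ne_top
          (pmeas_pball_two_mul_le hdoub t x hr)
    _ = ENNReal.ofReal (2 * √(4 * C_D)) * pmeas μ (pball (t, x) (2 * r)) ^ (-(1 : ℝ) / 2) := by
        rw [hsqrt, ENNReal.ofReal_mul zero_le_two, ENNReal.ofReal_ofNat, mul_assoc]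

lemma IsAtom12.exists_oddExtension_eq (hCD : 1 ≤ C_D)
    (hdoub : ∀ (x : E) (r : ℝ), 0 < r → μ (ball x (2 * r)) ≤ ENNReal.ofReal C_D * μ (ball x r))
    {a : ℝ × E → ℝ} (ha : IsAtom12 μ a) :
    ∃ (m₁ m₂ : ℝ) (A₁ A₂ : ℝ × E → ℝ), IsAtom12 μ A₁ ∧ IsAtom12 μ A₂ ∧
      |m₁| ≤ 2 * √(4 * C_D) ∧ |m₂| ≤ 2 * √(4 * C_D) ∧ oddExtension E a = m₁ • A₁ + m₂ • A₂ := by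
  obtain ⟨⟨t, x⟩, r, hr, hsupp, hint, -, hL2⟩ := id ha
  have hM : 1 ≤ 2 * √(4 * C_D) := by
    nlinarith [Real.one_le_sqrt.mpr (by linarith : (1 : ℝ) ≤ 4 * C_D)]
  rcases le_or_gt (t + r ^ 2) 0 with hout | hpos
  · refine ⟨0, 0, a, a, ha, ha, by rw [abs_zero]; linarith, by rw [abs_zero]; linarith, ?_⟩
    rw [oddExtension_of_disjoint ((disjoint_pball_Xset x hr hout).mono_left hsupp)]
    simp
  rcases le_or_gt (r ^ 2) t with hin | hstr
  · refine ⟨1, -1, a, a ∘ timeReflection E, ha, ha.comp_timeReflection, by simpa using hM,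
      by simpa using hM, ?_⟩
    rw [oddExtension_of_support_subset (hsupp.trans (pball_subset_Xset x hr hin))]
    simp [sub_eq_add_neg]
  · refine ⟨2 * √(4 * C_D), 0, _, a, isAtom12_smul_oddExtension (by linarith) hdoub hr hsupp hint
      hL2 (abs_lt.mpr ⟨by linarith, hstr⟩), ha, (abs_of_pos (by linarith)).le,
      by rw [abs_zero]; linarith, ?_⟩
    rw [smul_inv_smul₀ (by positivity), zero_smul, add_zero]

end OddExtensionOfAtoms

theorem stmt3_general {E : Type*} [MetricSpace E] [MeasurableSpace E]
    (μ : Measure E) (C_D : ℝ) (hCD : 1 ≤ C_D)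
    (hvol : ∀ (x : E) (r : ℝ), 0 < r → 0 < μ (ball x r) ∧ μ (ball x r) < ⊤)
    (hdoub : ∀ (x : E) (r : ℝ), 0 < r →
      μ (ball x (2 * r)) ≤ ENNReal.ofReal C_D * μ (ball x r))
    (f : ℝ × E → ℝ) :
    MemH1r μ f ↔
      ∃ F : ℝ × E → ℝ, MemH1 μ F ∧
        (∀ᵐ p ∂(pmeas μ), F (-p.1, p.2) = -F p) ∧
        F =ᵐ[(pmeas μ).restrict (Xset E)] f := by
  have : SigmaFinite μ := sigmaFinite_of_measure_ball_lt_top fun x r hr => (hvol x r hr).2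
  constructor
  · rintro ⟨-, F, hF, hFf⟩
    have hG : MemH1 μ (oddExtension E F) :=
      hF.map (oddExtension E) ENNReal.ofNat_ne_top (fun _ => integrable_oddExtension)
        (fun _ hg => eLpNorm_oddExtension_le hg.aestronglyMeasurable le_rfl)
        (fun _ ha => ha.exists_oddExtension_eq hCD hdoub)
    have hGF : oddExtension E F =ᵐ[(pmeas μ).restrict (Xset E)] F :=
      ae_restrict_of_forall_mem measurableSet_Xset fun p hp => oddExtension_of_mem F hp
    exact ⟨oddExtension E F, hG, ae_of_all _ (oddExtension_apply_neg F), hGF.trans hFf⟩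
  · rintro ⟨F, hF, -, hFf⟩
    exact ⟨hF.1.integrableOn.congr_fun_ae hFf, F, hF, hFf⟩

/-- `H¹_r(X)` is the space of restrictions to `X` of odd functions in `H¹(N)`:
an integrable `f` on `X` belongs to `H¹_r(X)` iff there is `F ∈ H¹(N)` with
`F(−t,x) = −F(t,x)` for `ν`-a.e. `(t,x)` and `F|_X = f` (`ν`-a.e. on `X`). -/
theorem stmt3 {E : Type*} [MetricSpace E] [MeasurableSpace E] [BorelSpace E]
    (μ : Measure E) (C_D : ℝ) (hCD : 1 ≤ C_D)
    (hvol : ∀ (x : E) (r : ℝ), 0 < r → 0 < μ (ball x r) ∧ μ (ball x r) < ⊤)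
    (hdoub : ∀ (x : E) (r : ℝ), 0 < r →
      μ (ball x (2 * r)) ≤ ENNReal.ofReal C_D * μ (ball x r))
    (f : ℝ × E → ℝ) (hf : IntegrableOn f (Xset E) (pmeas μ)) :
    MemH1r μ f ↔
      ∃ F : ℝ × E → ℝ, MemH1 μ F ∧
        (∀ᵐ p ∂(pmeas μ), F (-p.1, p.2) = -F p) ∧
        F =ᵐ[(pmeas μ).restrict (Xset E)] f :=
  stmt3_general μ C_D hCD hvol hdoub f
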